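/- arXiv:2506.06456 — 5 statements merged into one kernel-verified Lean document; each statement's English description precedes it below -/
import Mathlib

section
/- Let P be a 2×2 real matrix all of whose entries are nonzero, and let δ ≥ 0 satisfy |det P| ≤ δ. Then there exists a 2×2 real matrix P̂ of rank at most 1 such that ‖P − P̂‖_max ≤ δ · (max_{i,j} |P_{ij}|) / (2 · min_{i,j} P_{ij}²). -/
/-!
Keep the bottom row `(c, d)` of `P` and move `a` by `-D / (2d)` and `b` by `D / (2c)`, where
`D = ad - bc`: each move removes half of the determinant, so the new matrix is singular and hence
of rank at most one. The entries change by `|D| / (2|x|) = |D| |x| / (2x²)` with `x ∈ {c, d}`,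
which is at most `δ · max |P_ij| / (2 · min P_ij²)`.
-/

theorem Matrix.rank_lt_card_of_det_eq_zero {K n : Type*} [Field K] [Fintype n] [DecidableEq n]
    {A : Matrix n n K} (h : A.det = 0) : A.rank < Fintype.card n := by
  refine A.rank_le_card_width.lt_of_ne fun hA => ?_
  have hsurj : Function.Surjective A.mulVec := by
    rw [← A.coe_mulVecLin, ← LinearMap.range_eq_top]
    exact Submodule.eq_top_of_finrank_eq (hA.trans (Module.finrank_fintype_fun_eq_card K).symm)
  exact (A.isUnit_iff_isUnit_det.mp (A.mulVec_surjective_iff_isUnit.mp hsurj)).ne_zero h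

noncomputable def Matrix.splitDetCorrection (P : Matrix (Fin 2) (Fin 2) ℝ) :
    Matrix (Fin 2) (Fin 2) ℝ :=
  !![P 0 0 - P.det / (2 * P 1 1), P 0 1 + P.det / (2 * P 1 0); P 1 0, P 1 1]

theorem Matrix.det_splitDetCorrection {P : Matrix (Fin 2) (Fin 2) ℝ} (hc : P 1 0 ≠ 0)
    (hd : P 1 1 ≠ 0) : P.splitDetCorrection.det = 0 := by
  rw [Matrix.splitDetCorrection, Matrix.det_fin_two_of, Matrix.det_fin_two]
  field_simp
  ring

theorem abs_div_two_mul_le {D δ x m M : ℝ} (hD : |D| ≤ δ) (hm : 0 < m) (hmx : m ≤ x ^ 2)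
    (hxM : |x| ≤ M) : |D / (2 * x)| ≤ δ * M / (2 * m) := by
  have hx : 0 < |x| := by
    rw [abs_pos]
    rintro rfl
    simp only [ne_eq, OfNat.ofNat_ne_zero, not_false_eq_true, zero_pow] at hmx
    linarith
  rw [abs_div, abs_mul, abs_two, div_le_div_iff₀ (by positivity) (by positivity)]
  have hmxM : m ≤ |x| * M := hmx.trans (by rw [← sq_abs, sq]; gcongr)
  calc |D| * (2 * m) ≤ δ * (2 * (|x| * M)) := by
        gcongr
        exact (abs_nonneg D).trans hD
    _ = δ * M * (2 * |x|) := by ring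

theorem stmt4_general (P : Matrix (Fin 2) (Fin 2) ℝ) (hP : ∀ i j, P i j ≠ 0)
    (δ : ℝ) (hdet : |P.det| ≤ δ) :
    ∃ Phat : Matrix (Fin 2) (Fin 2) ℝ, Phat.rank ≤ 1 ∧
      ∀ i j, |P i j - Phat i j| ≤
        δ * (Finset.univ.sup' Finset.univ_nonempty
              fun p : Fin 2 × Fin 2 => |P p.1 p.2|) /
          (2 * Finset.univ.inf' Finset.univ_nonempty
              fun p : Fin 2 × Fin 2 => (P p.1 p.2) ^ 2) := by
  set M := Finset.univ.sup' Finset.univ_nonempty fun p : Fin 2 × Fin 2 => |P p.1 p.2|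
  set m := Finset.univ.inf' Finset.univ_nonempty fun p : Fin 2 × Fin 2 => (P p.1 p.2) ^ 2
  have hM (i j) : |P i j| ≤ M :=
    Finset.le_sup' (fun p : Fin 2 × Fin 2 => |P p.1 p.2|) (Finset.mem_univ (i, j))
  have hm (i j) : m ≤ P i j ^ 2 :=
    Finset.inf'_le (fun p : Fin 2 × Fin 2 => P p.1 p.2 ^ 2) (Finset.mem_univ (i, j))
  have hm_pos : 0 < m :=
    (Finset.lt_inf'_iff _).2 fun p _ => pow_two_pos_of_ne_zero (hP p.1 p.2)
  have hrank : P.splitDetCorrection.rank < 2 := by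
    simpa using Matrix.rank_lt_card_of_det_eq_zero
      (Matrix.det_splitDetCorrection (hP 1 0) (hP 1 1))
  have h00 := abs_div_two_mul_le hdet hm_pos (hm 1 1) (hM 1 1)
  have h01 := abs_div_two_mul_le hdet hm_pos (hm 1 0) (hM 1 0)
  refine ⟨P.splitDetCorrection, Nat.le_of_lt_succ hrank, fun i j => ?_⟩
  fin_cases i <;> fin_cases j
  · simpa [Matrix.splitDetCorrection] using h00
  · simpa [Matrix.splitDetCorrection] using h01
  all_goals simpa [Matrix.splitDetCorrection] using (abs_nonneg _).trans h00

/-- Let P be a 2×2 real matrix all of whose entries are nonzero, and let δ ≥ 0 satisfy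
|det P| ≤ δ. Then there exists a 2×2 real matrix P̂ of rank at most 1 such that
‖P − P̂‖_max ≤ δ · (max_{i,j} |P_{ij}|) / (2 · min_{i,j} P_{ij}²). -/
theorem stmt4 (P : Matrix (Fin 2) (Fin 2) ℝ) (hP : ∀ i j, P i j ≠ 0)
    (δ : ℝ) (hδ : 0 ≤ δ) (hdet : |P.det| ≤ δ) :
    ∃ Phat : Matrix (Fin 2) (Fin 2) ℝ, Phat.rank ≤ 1 ∧
      ∀ i j, |P i j - Phat i j| ≤
        δ * (Finset.univ.sup' Finset.univ_nonempty
              fun p : Fin 2 × Fin 2 => |P p.1 p.2|) /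
          (2 * Finset.univ.inf' Finset.univ_nonempty
              fun p : Fin 2 × Fin 2 => (P p.1 p.2) ^ 2) :=
  stmt4_general P hP δ hdet
end

section
/- Let P be a nonzero 2×2 real matrix, let δ ≥ 0 satisfy |det P| ≤ δ, and let γ_max denote the maximum of the Euclidean norms of the two rows and the two columns of P. Then there exists a 2×2 real matrix P̂ of rank at most 1 such that ‖P − P̂‖_F ≤ δ/γ_max. -/
/-! Let `γ` be the largest norm of a row or column of `P`, say of row `k`. Projecting every row
onto row `k` gives a rank-one matrix that differs from `P` only in the other row, and the
residual there is the height of the parallelogram spanned by the two rows over the base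
row `k`, i.e. `|det P| / γ`. Columns are handled by transposing. -/

open Matrix

noncomputable def Matrix.rowProjection {m n : Type*} [Fintype n] (P : Matrix m n ℝ) (k : m) :
    Matrix m n ℝ :=
  vecMulVec (fun i ↦ (∑ j, P i j * P k j) / ∑ j, P k j ^ 2) (P k)

lemma Matrix.rank_rowProjection_le_one {m n : Type*} [Fintype m] [Fintype n]
    (P : Matrix m n ℝ) (k : m) : (P.rowProjection k).rank ≤ 1 :=
  rank_vecMulVec_le _ _

lemma Matrix.sum_sq_sub_rowProjection (P : Matrix (Fin 2) (Fin 2) ℝ) (k : Fin 2)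
    (hk : ∑ j, P k j ^ 2 ≠ 0) :
    ∑ i, ∑ j, (P i j - P.rowProjection k i j) ^ 2 = P.det ^ 2 / ∑ j, P k j ^ 2 := by
  simp only [rowProjection, Fin.sum_univ_two, vecMulVec_apply, det_fin_two] at hk ⊢
  fin_cases k <;> simp at hk ⊢ <;> field_simp <;> ring

lemma Matrix.exists_sum_sq_row_pos {m n : Type*} [Fintype n] {P : Matrix m n ℝ} (hP : P ≠ 0) :
    ∃ i, 0 < ∑ j, P i j ^ 2 := by
  by_contra! h
  refine hP (Matrix.ext fun i j ↦ ?_)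
  have hrow := (Finset.sum_eq_zero_iff_of_nonneg fun j _ ↦ sq_nonneg (P i j)).1
    ((h i).antisymm (by positivity))
  exact pow_eq_zero_iff two_ne_zero |>.1 (hrow j (Finset.mem_univ j))

lemma exists_rank_le_one_dist_eq_of_row (P : Matrix (Fin 2) (Fin 2) ℝ) (k : Fin 2)
    (hk : ∑ j, P k j ^ 2 ≠ 0) :
    ∃ Q : Matrix (Fin 2) (Fin 2) ℝ, Q.rank ≤ 1 ∧
      √(∑ i, ∑ j, (P i j - Q i j) ^ 2) = |P.det| / √(∑ j, P k j ^ 2) := by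
  refine ⟨P.rowProjection k, P.rank_rowProjection_le_one k, ?_⟩
  rw [P.sum_sq_sub_rowProjection k hk, Real.sqrt_div' _ (by positivity), Real.sqrt_sq_eq_abs]

lemma exists_rank_le_one_dist_eq_of_col (P : Matrix (Fin 2) (Fin 2) ℝ) (k : Fin 2)
    (hk : ∑ i, P i k ^ 2 ≠ 0) :
    ∃ Q : Matrix (Fin 2) (Fin 2) ℝ, Q.rank ≤ 1 ∧
      √(∑ i, ∑ j, (P i j - Q i j) ^ 2) = |P.det| / √(∑ i, P i k ^ 2) := by
  obtain ⟨Q, hQ, hdist⟩ := exists_rank_le_one_dist_eq_of_row Pᵀ k hk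
  refine ⟨Qᵀ, by rwa [rank_transpose], ?_⟩
  rwa [det_transpose, Finset.sum_comm] at hdist

theorem stmt5_general (P : Matrix (Fin 2) (Fin 2) ℝ) (hP : P ≠ 0)
    (δ : ℝ) (hdet : |P.det| ≤ δ) :
    ∃ Phat : Matrix (Fin 2) (Fin 2) ℝ, Phat.rank ≤ 1 ∧
      Real.sqrt (∑ i, ∑ j, (P i j - Phat i j) ^ 2) ≤
        δ / max (max (Real.sqrt ((P 0 0) ^ 2 + (P 0 1) ^ 2))
                     (Real.sqrt ((P 1 0) ^ 2 + (P 1 1) ^ 2)))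
                (max (Real.sqrt ((P 0 0) ^ 2 + (P 1 0) ^ 2))
                     (Real.sqrt ((P 0 1) ^ 2 + (P 1 1) ^ 2))) := by
  set γ := max (max (√(P 0 0 ^ 2 + P 0 1 ^ 2)) (√(P 1 0 ^ 2 + P 1 1 ^ 2)))
    (max (√(P 0 0 ^ 2 + P 1 0 ^ 2)) (√(P 0 1 ^ 2 + P 1 1 ^ 2)))
  have hγ_pos : 0 < γ := by
    obtain ⟨k, hk⟩ := Matrix.exists_sum_sq_row_pos hP
    have hle : √(∑ j, P k j ^ 2) ≤ γ := by fin_cases k <;> simp [γ, Fin.sum_univ_two]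
    exact (Real.sqrt_pos.2 hk).trans_le hle
  obtain ⟨Q, hQ, hdist⟩ : ∃ Q : Matrix (Fin 2) (Fin 2) ℝ, Q.rank ≤ 1 ∧
      √(∑ i, ∑ j, (P i j - Q i j) ^ 2) = |P.det| / γ := by
    let Attained (s : ℝ) : Prop := 0 < s → ∃ Q : Matrix (Fin 2) (Fin 2) ℝ, Q.rank ≤ 1 ∧
      √(∑ i, ∑ j, (P i j - Q i j) ^ 2) = |P.det| / s
    suffices Attained γ from this hγ_pos
    refine max_rec' Attained (max_rec' Attained ?_ ?_) (max_rec' Attained ?_ ?_) <;>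
      intro hs <;> have hsum := (Real.sqrt_pos.1 hs).ne'
    · simpa [Fin.sum_univ_two] using
        exists_rank_le_one_dist_eq_of_row P 0 (by simpa [Fin.sum_univ_two] using hsum)
    · simpa [Fin.sum_univ_two] using
        exists_rank_le_one_dist_eq_of_row P 1 (by simpa [Fin.sum_univ_two] using hsum)
    · simpa [Fin.sum_univ_two] using
        exists_rank_le_one_dist_eq_of_col P 0 (by simpa [Fin.sum_univ_two] using hsum)
    · simpa [Fin.sum_univ_two] using
        exists_rank_le_one_dist_eq_of_col P 1 (by simpa [Fin.sum_univ_two] using hsum)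
  exact ⟨Q, hQ, hdist ▸ div_le_div_of_nonneg_right hdet hγ_pos.le⟩

/-- Let P be a nonzero 2×2 real matrix, let δ ≥ 0 satisfy |det P| ≤ δ, and let γ_max
denote the maximum of the Euclidean norms of the two rows and the two columns of P.
Then there exists a 2×2 real matrix P̂ of rank at most 1 such that ‖P − P̂‖_F ≤ δ/γ_max. -/
theorem stmt5 (P : Matrix (Fin 2) (Fin 2) ℝ) (hP : P ≠ 0)
    (δ : ℝ) (hδ : 0 ≤ δ) (hdet : |P.det| ≤ δ) :
    ∃ Phat : Matrix (Fin 2) (Fin 2) ℝ, Phat.rank ≤ 1 ∧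
      Real.sqrt (∑ i, ∑ j, (P i j - Phat i j) ^ 2) ≤
        δ / max (max (Real.sqrt ((P 0 0) ^ 2 + (P 0 1) ^ 2))
                     (Real.sqrt ((P 1 0) ^ 2 + (P 1 1) ^ 2)))
                (max (Real.sqrt ((P 0 0) ^ 2 + (P 1 0) ^ 2))
                     (Real.sqrt ((P 0 1) ^ 2 + (P 1 1) ^ 2))) :=
  stmt5_general P hP δ hdet
end

section
/- Let m ≥ 1, let x ∈ ℝ^m be a nonzero vector, let y ∈ ℝ^m, let δ ≥ 0, and suppose that |y_i x_j − y_j x_i| ≤ δ·|x_i|·|x_j| for all indices i, j. Let ε = y − (⟪x,y⟫/‖x‖²)·x be the projection residual of y onto x. Then ‖ε‖₂² ≤ δ² · (Σ_{i<j} x_i² x_j²) / ‖x‖₂². -/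
open scoped RealInnerProductSpace

open Finset in
lemma sum_pairs_aux {m : ℕ} (f : Fin m × Fin m → ℝ) (hsym : ∀ i j, f (j, i) = f (i, j))
    (hdiag : ∀ i, f (i, i) = 0) :
    ∑ p : Fin m × Fin m, f p
      = 2 * ∑ p ∈ univ.filter (fun p : Fin m × Fin m => p.1 < p.2), f p := by
  have h1 := Finset.sum_filter_add_sum_filter_not Finset.univ
    (fun p : Fin m × Fin m => p.1 < p.2) f
  have h2 := Finset.sum_filter_add_sum_filter_not
    (Finset.univ.filter (fun p : Fin m × Fin m => ¬ p.1 < p.2))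
    (fun p : Fin m × Fin m => p.2 < p.1) f
  have hgt : ∑ p ∈ (Finset.univ.filter (fun p : Fin m × Fin m => ¬ p.1 < p.2)).filter
      (fun p : Fin m × Fin m => p.2 < p.1), f p
      = ∑ p ∈ Finset.univ.filter (fun p : Fin m × Fin m => p.1 < p.2), f p := by
    refine Finset.sum_nbij' (fun p => p.swap) (fun p => p.swap) ?_ ?_ ?_ ?_ ?_
    · intro p hp
      simp only [Finset.mem_filter, Finset.mem_univ, true_and] at hp ⊢
      exact hp.2
    · intro p hp
      simp only [Finset.mem_filter, Finset.mem_univ, true_and] at hp ⊢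
      exact ⟨not_lt.mpr hp.le, hp⟩
    · intro p _; simp
    · intro p _; simp
    · intro p _; exact (hsym p.1 p.2) ▸ (by cases p; rfl)
  have hdg : ∑ p ∈ (Finset.univ.filter (fun p : Fin m × Fin m => ¬ p.1 < p.2)).filter
      (fun p : Fin m × Fin m => ¬ p.2 < p.1), f p = 0 := by
    refine Finset.sum_eq_zero fun p hp => ?_
    simp only [Finset.mem_filter, Finset.mem_univ, true_and, not_lt] at hp
    have : p.1 = p.2 := le_antisymm hp.2 hp.1
    cases p with
    | mk a b => simp only at this; rw [this]; exact hdiag b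
  rw [hgt, hdg] at h2
  linarith [h1, h2]

open Finset in
lemma lagrange_identity {m : ℕ} (a b : Fin m → ℝ) :
    2 * ∑ p ∈ univ.filter (fun p : Fin m × Fin m => p.1 < p.2),
        (a p.1 * b p.2 - a p.2 * b p.1) ^ 2
      = (∑ i, a i ^ 2) * (∑ i, b i ^ 2) - (∑ i, a i * b i) ^ 2
        + ((∑ i, b i ^ 2) * (∑ i, a i ^ 2) - (∑ i, a i * b i) ^ 2) := by
  rw [← sum_pairs_aux (fun p => (a p.1 * b p.2 - a p.2 * b p.1) ^ 2)
      (fun i j => by ring) (fun i => by ring)]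
  rw [Fintype.sum_prod_type]
  have : ∀ i : Fin m, ∑ j, (a i * b j - a j * b i) ^ 2
      = a i ^ 2 * (∑ j, b j ^ 2) - 2 * (a i * b i) * (∑ j, a j * b j)
        + b i ^ 2 * (∑ j, a j ^ 2) := by
    intro i
    simp only [Finset.mul_sum, ← Finset.sum_sub_distrib, ← Finset.sum_add_distrib]
    exact Finset.sum_congr rfl fun j _ => by ring
  simp only [this]
  have e1 : ∑ i, a i ^ 2 * (∑ j, b j ^ 2) = (∑ i, a i ^ 2) * (∑ j, b j ^ 2) :=
    (Finset.sum_mul _ _ _).symm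
  have e2 : ∑ i, 2 * (a i * b i) * (∑ j, a j * b j)
      = 2 * (∑ i, a i * b i) * (∑ j, a j * b j) := by
    calc ∑ i, 2 * (a i * b i) * (∑ j, a j * b j)
        = ∑ i, (a i * b i) * (2 * (∑ j, a j * b j)) :=
          Finset.sum_congr rfl fun i _ => by ring
      _ = (∑ i, a i * b i) * (2 * (∑ j, a j * b j)) := (Finset.sum_mul _ _ _).symm
      _ = 2 * (∑ i, a i * b i) * (∑ j, a j * b j) := by ring
  have e3 : ∑ i, b i ^ 2 * (∑ j, a j ^ 2) = (∑ i, b i ^ 2) * (∑ j, a j ^ 2) :=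
    (Finset.sum_mul _ _ _).symm
  rw [Finset.sum_add_distrib, Finset.sum_sub_distrib, e1, e2, e3]
  ring

/-- Let m ≥ 1, let x ∈ ℝ^m be a nonzero vector, let y ∈ ℝ^m, let δ ≥ 0, and suppose that
|y_i x_j − y_j x_i| ≤ δ·|x_i|·|x_j| for all indices i, j. Let ε = y − (⟪x,y⟫/‖x‖²)·x be
the projection residual of y onto x. Then ‖ε‖₂² ≤ δ² · (Σ_{i<j} x_i² x_j²) / ‖x‖₂². -/
theorem stmt7 (m : ℕ) (hm : 1 ≤ m) (x y : EuclideanSpace ℝ (Fin m)) (hx : x ≠ 0)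
    (δ : ℝ) (hδ : 0 ≤ δ)
    (h : ∀ i j, |y i * x j - y j * x i| ≤ δ * |x i| * |x j|) :
    ‖y - (⟪x, y⟫ / ‖x‖ ^ 2) • x‖ ^ 2 ≤
      δ ^ 2 * (∑ p ∈ Finset.univ.filter (fun p : Fin m × Fin m => p.1 < p.2),
        (x p.1) ^ 2 * (x p.2) ^ 2) / ‖x‖ ^ 2 := by
  have hx0 : (0:ℝ) < ‖x‖ := norm_pos_iff.mpr hx
  have hS : (0:ℝ) < ‖x‖ ^ 2 := by positivity
  set S := ‖x‖ ^ 2 with hSdef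
  -- compute ‖ε‖²
  have hnorm : ‖y - (⟪x, y⟫ / S) • x‖ ^ 2 = ‖y‖ ^ 2 - ⟪x, y⟫ ^ 2 / S := by
    rw [norm_sub_sq_real]
    rw [real_inner_smul_right, norm_smul]
    have : ⟪y, x⟫ = ⟪x, y⟫ := real_inner_comm x y
    rw [this]
    rw [Real.norm_eq_abs, mul_pow, sq_abs, div_pow]
    field_simp
    ring
  rw [hnorm]
  -- inner and norms as sums
  have hinner : ⟪x, y⟫ = ∑ i, x i * y i := by
    simp [PiLp.inner_apply, RCLike.inner_apply, conj_trivial]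
    exact Finset.sum_congr rfl fun i _ => mul_comm _ _
  have hxnorm : S = ∑ i, x i ^ 2 := by
    rw [hSdef, @norm_sq_eq_re_inner ℝ]
    simp only [RCLike.re_to_real, PiLp.inner_apply, RCLike.inner_apply, conj_trivial, sq]
  have hynorm : ‖y‖ ^ 2 = ∑ i, y i ^ 2 := by
    rw [@norm_sq_eq_re_inner ℝ]
    simp only [RCLike.re_to_real, PiLp.inner_apply, RCLike.inner_apply, conj_trivial, sq]
  -- key inequality, cleared of denominators
  rw [le_div_iff₀ hS]
  have hlag := lagrange_identity (fun i => x i) (fun i => y i)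
  have hterm : ∑ p ∈ Finset.univ.filter (fun p : Fin m × Fin m => p.1 < p.2),
      (x p.1 * y p.2 - x p.2 * y p.1) ^ 2
      ≤ ∑ p ∈ Finset.univ.filter (fun p : Fin m × Fin m => p.1 < p.2),
        δ ^ 2 * ((x p.1) ^ 2 * (x p.2) ^ 2) := by
    refine Finset.sum_le_sum fun p _ => ?_
    have h1 := h p.1 p.2
    have h2 : |x p.1 * y p.2 - x p.2 * y p.1| = |y p.1 * x p.2 - y p.2 * x p.1| := by
      rw [← abs_neg]; ring_nf
    calc (x p.1 * y p.2 - x p.2 * y p.1) ^ 2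
        = |y p.1 * x p.2 - y p.2 * x p.1| ^ 2 := by rw [← h2, sq_abs]
      _ ≤ (δ * |x p.1| * |x p.2|) ^ 2 := by
          apply pow_le_pow_left₀ (abs_nonneg _) h1
      _ = δ ^ 2 * ((x p.1) ^ 2 * (x p.2) ^ 2) := by
          rw [mul_pow, mul_pow, sq_abs, sq_abs]; ring
  rw [← Finset.mul_sum] at hterm
  -- combine
  have key : (‖y‖ ^ 2 - ⟪x, y⟫ ^ 2 / S) * S
      = ∑ p ∈ Finset.univ.filter (fun p : Fin m × Fin m => p.1 < p.2),
        (x p.1 * y p.2 - x p.2 * y p.1) ^ 2 := by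
    have : (‖y‖ ^ 2 - ⟪x, y⟫ ^ 2 / S) * S = ‖y‖ ^ 2 * S - ⟪x, y⟫ ^ 2 := by
      field_simp
    rw [this, hxnorm, hynorm, hinner]
    nlinarith [hlag]
  rw [key]
  exact hterm
end

section
/- Let X be an n×m real matrix with n ≥ 1, let a be a row index such that X_{a,j} ≠ 0 for every column j, and let δ ≥ 0. Suppose that for every row index i and all column indices j₁, j₂ it holds that |X_{i,j₁}/X_{a,j₁} − X_{i,j₂}/X_{a,j₂}| ≤ δ. Then there exists an n×m real matrix X̂ of rank at most 1 such that ‖X − X̂‖_F ≤ δ · √( (n−1) · (Σ_{j₁<j₂} X_{a,j₁}² X_{a,j₂}²) / (Σ_j X_{a,j}²) ). -/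
/-!
Replace every row `i` of `X` by its least-squares multiple `c i • X a` of row `a`. With weights
`w j = X a j ^ 2` and ratios `r j = X i j / X a j`, the squared error of row `i` is the
`w`-weighted variance of `r`, and `(∑ w) • Var = ∑_{j<k} w j * w k * (r j - r k) ^ 2`, which
the hypothesis bounds by `δ ^ 2 * ∑_{j<k} w j * w k`. Row `a` itself is reproduced exactly, so
only `n - 1` rows contribute.
-/

open Finset

theorem sum_sum_eq_sum_lt_add_sum_diag {ι M : Type*} [Fintype ι] [LinearOrder ι]
    [AddCommMonoid M] (F : ι → ι → M) :
    ∑ j, ∑ k, F j k =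
      ∑ p ∈ univ.filter (fun p : ι × ι => p.1 < p.2), (F p.1 p.2 + F p.2 p.1) + ∑ j, F j j := by
  have hsplit : ∀ j k, F j k = ((if j < k then F j k else 0) + if k < j then F j k else 0) +
      if j = k then F j k else 0 := by
    intro j k
    rcases lt_trichotomy j k with hjk | rfl | hjk
    · simp [hjk, hjk.ne, hjk.not_gt]
    · simp
    · simp [hjk, hjk.ne', hjk.not_gt]
  rw [sum_filter, Fintype.sum_prod_type, sum_congr rfl fun j _ =>
    sum_congr rfl fun k _ => hsplit j k]
  simp only [sum_add_distrib, sum_ite_eq, mem_univ, if_true]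
  rw [sum_comm (f := fun j k => if k < j then F j k else 0)]
  simp only [← sum_add_distrib, ite_add_ite, add_zero]

theorem sum_sum_mul_mul_sub_sq {ι R : Type*} [Fintype ι] [CommRing R] (w s : ι → R) :
    ∑ j, ∑ k, w j * w k * (s j - s k) ^ 2 =
      2 * ((∑ j, w j) * ∑ j, w j * s j ^ 2 - (∑ j, w j * s j) ^ 2) := by
  have hexpand : ∀ j k, w j * w k * (s j - s k) ^ 2 =
      w k * (w j * s j ^ 2) + w j * (w k * s k ^ 2) - 2 * (w j * s j) * (w k * s k) :=
    fun j k => by ring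
  simp only [hexpand, sum_sub_distrib, sum_add_distrib, ← mul_sum, ← sum_mul]
  ring

theorem sum_mul_sub_centerMass_eq_zero {ι K : Type*} [Fintype ι] [Field K] (w r : ι → K)
    (hW : ∑ j, w j ≠ 0) : ∑ j, w j * (r j - univ.centerMass w r) = 0 := by
  simp only [centerMass, smul_eq_mul, mul_sub, sum_sub_distrib, ← sum_mul]
  field_simp
  ring

theorem sum_sum_mul_mul_sub_sq_eq_centerMass {ι K : Type*} [Fintype ι] [Field K]
    (w r : ι → K) (hW : ∑ j, w j ≠ 0) :
    ∑ j, ∑ k, w j * w k * (r j - r k) ^ 2 =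
      2 * ((∑ j, w j) * ∑ j, w j * (r j - univ.centerMass w r) ^ 2) := by
  simpa [sub_sub_sub_cancel_right, sum_mul_sub_centerMass_eq_zero w r hW] using
    sum_sum_mul_mul_sub_sq w (fun j => r j - univ.centerMass w r)

theorem mul_sum_mul_sq_sub_centerMass_le {ι K : Type*} [Fintype ι] [LinearOrder ι] [Field K]
    [LinearOrder K] [IsStrictOrderedRing K] {w : ι → K} (hw : ∀ j, 0 ≤ w j) (r : ι → K) {δ : K}
    (hr : ∀ j k, |r j - r k| ≤ δ) :
    (∑ j, w j) * ∑ j, w j * (r j - univ.centerMass w r) ^ 2 ≤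
      δ ^ 2 * ∑ p ∈ univ.filter (fun p : ι × ι => p.1 < p.2), w p.1 * w p.2 := by
  have hrhs : 0 ≤ δ ^ 2 * ∑ p ∈ univ.filter (fun p : ι × ι => p.1 < p.2), w p.1 * w p.2 :=
    mul_nonneg (sq_nonneg δ) (sum_nonneg fun p _ => mul_nonneg (hw _) (hw _))
  rcases eq_or_ne (∑ j, w j) 0 with hW | hW
  · simpa [hW] using hrhs
  have hpairs : (∑ j, w j) * ∑ j, w j * (r j - univ.centerMass w r) ^ 2 =
      ∑ p ∈ univ.filter (fun p : ι × ι => p.1 < p.2), w p.1 * w p.2 * (r p.1 - r p.2) ^ 2 := by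
    have := sum_sum_mul_mul_sub_sq_eq_centerMass w r hW
    have hswap : ∀ p : ι × ι, w p.1 * w p.2 * (r p.1 - r p.2) ^ 2 +
        w p.2 * w p.1 * (r p.2 - r p.1) ^ 2 = 2 * (w p.1 * w p.2 * (r p.1 - r p.2) ^ 2) :=
      fun p => by ring
    simp only [sum_sum_eq_sum_lt_add_sum_diag, hswap, ← mul_sum, sub_self, ne_eq,
      OfNat.ofNat_ne_zero, not_false_eq_true, zero_pow, mul_zero, sum_const_zero,
      add_zero] at this
    linarith
  rw [hpairs, mul_sum]
  refine sum_le_sum fun p _ => ?_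
  have hsq : (r p.1 - r p.2) ^ 2 ≤ δ ^ 2 := by
    rw [← sq_abs]; exact pow_le_pow_left₀ (abs_nonneg _) (hr _ _) 2
  nlinarith [mul_nonneg (hw p.1) (hw p.2)]

theorem sum_sq_sub_mul_eq_sum_sq_mul_sq_div_sub {ι K : Type*} [Fintype ι] [Field K]
    (x : ι → K) {v : ι → K} (hv : ∀ j, v j ≠ 0) (t : K) :
    ∑ j, (x j - t * v j) ^ 2 = ∑ j, v j ^ 2 * (x j / v j - t) ^ 2 := by
  refine sum_congr rfl fun j _ => ?_
  field_simp [hv j]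

theorem sum_le_card_sub_one_mul_of_eq_zero {ι R : Type*} [Fintype ι] [Ring R] [LinearOrder R]
    [IsOrderedRing R] {f : ι → R} {B : R} (hB : ∀ i, f i ≤ B) {a : ι} (ha : f a = 0) :
    ∑ i, f i ≤ ((Fintype.card ι : R) - 1) * B := by
  classical
  rw [← add_sum_erase _ _ (mem_univ a), ha, zero_add]
  calc ∑ i ∈ univ.erase a, f i ≤ (univ.erase a).card • B :=
        sum_le_card_nsmul _ _ _ fun i _ => hB i
    _ = ((Fintype.card ι : R) - 1) * B := by
      rw [card_erase_of_mem (mem_univ a), card_univ, nsmul_eq_mul,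
        Nat.cast_sub (Fintype.card_pos_iff.mpr ⟨a⟩), Nat.cast_one]

namespace Matrix

variable {ι κ K : Type*} [Fintype κ] [Field K]

/-- Row `i` is replaced by its least-squares multiple of row `a`. -/
def rankOneFit (X : Matrix ι κ K) (a : ι) : Matrix ι κ K :=
  vecMulVec (fun i => univ.centerMass (fun j => X a j ^ 2) fun j => X i j / X a j) (X a)

theorem rankOneFit_apply_self [LinearOrder K] [IsStrictOrderedRing K] {X : Matrix ι κ K}
    {a : ι} (ha : ∀ j, X a j ≠ 0) (j : κ) : rankOneFit X a a j = X a j := by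
  have hW : ∑ k, X a k ^ 2 ≠ 0 :=
    (sum_pos (fun k _ => sq_pos_of_ne_zero (ha k)) ⟨j, mem_univ j⟩).ne'
  have hmean : univ.centerMass (fun k => X a k ^ 2) (fun _ => (1 : K)) = 1 :=
    centerMass_const hW 1
  simp only [rankOneFit, vecMulVec_apply, div_self (ha _), hmean, one_mul]

theorem mul_sum_sub_rankOneFit_sq_le [LinearOrder κ] [LinearOrder K] [IsStrictOrderedRing K]
    {X : Matrix ι κ K} {a : ι} (ha : ∀ j, X a j ≠ 0) {δ : K} (i : ι)
    (h : ∀ j₁ j₂, |X i j₁ / X a j₁ - X i j₂ / X a j₂| ≤ δ) :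
    (∑ j, X a j ^ 2) * ∑ j, (X i j - rankOneFit X a i j) ^ 2 ≤
      δ ^ 2 * ∑ p ∈ univ.filter (fun p : κ × κ => p.1 < p.2), X a p.1 ^ 2 * X a p.2 ^ 2 := by
  simp only [rankOneFit, vecMulVec_apply]
  rw [sum_sq_sub_mul_eq_sum_sq_mul_sq_div_sub _ ha]
  exact mul_sum_mul_sq_sub_centerMass_le (fun j => sq_nonneg _) _ h

end Matrix

theorem stmt8_general (n m : ℕ) (X : Matrix (Fin n) (Fin m) ℝ) (a : Fin n)
    (ha : ∀ j, X a j ≠ 0) (δ : ℝ)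
    (h : ∀ i j₁ j₂, |X i j₁ / X a j₁ - X i j₂ / X a j₂| ≤ δ) :
    ∃ Xhat : Matrix (Fin n) (Fin m) ℝ, Xhat.rank ≤ 1 ∧
      Real.sqrt (∑ i, ∑ j, (X i j - Xhat i j) ^ 2) ≤
        δ * Real.sqrt (((n : ℝ) - 1) *
          (∑ p ∈ Finset.univ.filter (fun p : Fin m × Fin m => p.1 < p.2),
            (X a p.1) ^ 2 * (X a p.2) ^ 2) / (∑ j, (X a j) ^ 2)) := by
  rcases isEmpty_or_nonempty (Fin m) with _ | ⟨⟨j₀⟩⟩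
  · exact ⟨0, by simp, by simp⟩
  have hδ : 0 ≤ δ := by simpa using h a j₀ j₀
  set W := ∑ j, X a j ^ 2
  set P := ∑ p ∈ univ.filter (fun p : Fin m × Fin m => p.1 < p.2), X a p.1 ^ 2 * X a p.2 ^ 2
  have hW : 0 < W := sum_pos (fun j _ => sq_pos_of_ne_zero (ha j)) ⟨j₀, mem_univ _⟩
  refine ⟨X.rankOneFit a, Matrix.rank_vecMulVec_le _ _, ?_⟩
  have hrow : ∀ i, ∑ j, (X i j - X.rankOneFit a i j) ^ 2 ≤ δ ^ 2 * P / W := fun i => by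
    rw [le_div_iff₀ hW, mul_comm]
    exact Matrix.mul_sum_sub_rankOneFit_sq_le ha i (h i)
  have hrow_a : ∑ j, (X a j - X.rankOneFit a a j) ^ 2 = 0 := by
    simp [Matrix.rankOneFit_apply_self ha]
  have htotal := sum_le_card_sub_one_mul_of_eq_zero hrow hrow_a
  rw [Fintype.card_fin] at htotal
  calc _ ≤ √(δ ^ 2 * (((n : ℝ) - 1) * P / W)) := Real.sqrt_le_sqrt (htotal.trans_eq (by ring))
    _ = δ * √(((n : ℝ) - 1) * P / W) := by rw [Real.sqrt_mul (sq_nonneg δ), Real.sqrt_sq hδ]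

/-- Let X be an n×m real matrix with n ≥ 1, let a be a row index such that X_{a,j} ≠ 0 for
every column j, and let δ ≥ 0. Suppose that for every row index i and all column indices
j₁, j₂ it holds that |X_{i,j₁}/X_{a,j₁} − X_{i,j₂}/X_{a,j₂}| ≤ δ. Then there exists an
n×m real matrix X̂ of rank at most 1 such that
‖X − X̂‖_F ≤ δ · √((n−1)·(Σ_{j₁<j₂} X_{a,j₁}² X_{a,j₂}²)/(Σ_j X_{a,j}²)). -/
theorem stmt8 (n m : ℕ) (hn : 1 ≤ n) (X : Matrix (Fin n) (Fin m) ℝ) (a : Fin n)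
    (ha : ∀ j, X a j ≠ 0) (δ : ℝ) (hδ : 0 ≤ δ)
    (h : ∀ i j₁ j₂, |X i j₁ / X a j₁ - X i j₂ / X a j₂| ≤ δ) :
    ∃ Xhat : Matrix (Fin n) (Fin m) ℝ, Xhat.rank ≤ 1 ∧
      Real.sqrt (∑ i, ∑ j, (X i j - Xhat i j) ^ 2) ≤
        δ * Real.sqrt (((n : ℝ) - 1) *
          (∑ p ∈ Finset.univ.filter (fun p : Fin m × Fin m => p.1 < p.2),
            (X a p.1) ^ 2 * (X a p.2) ^ 2) / (∑ j, (X a j) ^ 2)) :=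
  stmt8_general n m X a ha δ h
end

section
/- Let G be an n×n real symmetric matrix with n ≥ 1, and let c ∈ ℝ be such that G_{ij} ≥ c for all pairs of distinct indices i ≠ j. Then G has an eigenvalue λ satisfying λ ≥ (tr G)/n + (n − 1)·c. -/
/-- Let G be an n×n real symmetric matrix with n ≥ 1, and let c ∈ ℝ be such that
G_{ij} ≥ c for all pairs of distinct indices i ≠ j. Then G has an eigenvalue λ satisfying
λ ≥ (tr G)/n + (n − 1)·c. -/
theorem stmt10 (n : ℕ) (hn : 1 ≤ n) (G : Matrix (Fin n) (Fin n) ℝ) (hG : G.IsSymm)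
    (c : ℝ) (hc : ∀ i j, i ≠ j → c ≤ G i j) :
    ∃ (lam : ℝ) (v : Fin n → ℝ), v ≠ 0 ∧ G.mulVec v = lam • v ∧
      G.trace / (n : ℝ) + ((n : ℝ) - 1) * c ≤ lam := by
  have hA : G.IsHermitian := by
    rwa [Matrix.IsHermitian, Matrix.conjTranspose_eq_transpose_of_trivial]
  haveI : Nonempty (Fin n) := ⟨⟨0, hn⟩⟩
  obtain ⟨i, hi⟩ := Finite.exists_max hA.eigenvalues
  set b := hA.eigenvectorBasis with hb
  set μ := hA.eigenvalues with hμ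
  refine ⟨μ i, b i, ?_, hA.mulVec_eigenvectorBasis i, ?_⟩
  · have h0 := b.orthonormal.ne_zero i
    intro h
    exact h0 (by ext j; exact congrFun h j)
  · set x : EuclideanSpace ℝ (Fin n) := (WithLp.equiv 2 (Fin n → ℝ)).symm (fun _ => 1) with hx
    set r : Fin n → ℝ := fun j => b.repr x j with hr
    have hxfun : ∀ k, x k = 1 := fun k => rfl
    have hrinner : ∀ j, r j = inner ℝ (b j) x := fun j => b.repr_apply_apply x j
    -- sum of squares of coefficients = n
    have hsum2 : ∑ j, r j ^ 2 = (n : ℝ) := by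
      have := b.sum_inner_mul_inner x x
      have hxx : (inner ℝ x x : ℝ) = (n : ℝ) := by
        rw [PiLp.inner_apply]; simp [hxfun]
      rw [hxx] at this
      rw [← this]
      refine Finset.sum_congr rfl fun j _ => ?_
      rw [hrinner, real_inner_comm, sq]
    -- expansion of x in eigenbasis, as functions
    have hexp : ∀ k, x k = ∑ j, r j * b j k := by
      intro k
      have h2 := congrArg (fun y : EuclideanSpace ℝ (Fin n) => y k) (b.sum_repr x)
      simp only at h2
      rw [← h2, WithLp.ofLp_sum, Finset.sum_apply]
      rfl
    have hrsum : ∀ j, r j = ∑ k, b j k := by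
      intro j
      rw [hrinner, PiLp.inner_apply]
      simp [hxfun, RCLike.inner_apply]
    have hmv : ∀ j k, ∑ l, G k l * b j l = μ j * b j k := by
      intro j k
      have := congrFun (hA.mulVec_eigenvectorBasis j) k
      simpa [Matrix.mulVec, dotProduct] using this
    have hGx : ∀ k, (G.mulVec x) k = ∑ j, μ j * r j * b j k := by
      intro k
      calc (G.mulVec x) k = ∑ l, G k l * x l := by simp [Matrix.mulVec, dotProduct]
        _ = ∑ l, ∑ j, G k l * (r j * b j l) := by
            refine Finset.sum_congr rfl fun l _ => ?_
            rw [hexp l, Finset.mul_sum]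
        _ = ∑ j, ∑ l, G k l * (r j * b j l) := Finset.sum_comm
        _ = ∑ j, μ j * r j * b j k := by
            refine Finset.sum_congr rfl fun j _ => ?_
            have h3 : ∑ l, G k l * (r j * b j l) = r j * ∑ l, G k l * b j l := by
              rw [Finset.mul_sum]; exact Finset.sum_congr rfl fun l _ => by ring
            rw [h3, hmv j k]; ring
    have hdot : dotProduct x (G.mulVec x) = ∑ j, μ j * r j ^ 2 := by
      calc dotProduct x (G.mulVec x) = ∑ k, (G.mulVec x) k := by simp [dotProduct, hxfun]
        _ = ∑ k, ∑ j, μ j * r j * b j k := Finset.sum_congr rfl fun k _ => hGx k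
        _ = ∑ j, μ j * r j * ∑ k, b j k := by
            rw [Finset.sum_comm]
            exact Finset.sum_congr rfl fun j _ => (Finset.mul_sum _ _ _).symm
        _ = ∑ j, μ j * r j ^ 2 := Finset.sum_congr rfl fun j _ => by rw [← hrsum j]; ring
    have hdot2 : dotProduct x (G.mulVec x) = ∑ j, ∑ k, G j k := by
      simp [dotProduct, Matrix.mulVec, hxfun]
    -- lower bound on quadratic form
    have hlow : G.trace + (n : ℝ) * (((n : ℝ) - 1) * c) ≤ ∑ j, ∑ k, G j k := by
      have : ∀ j : Fin n, G j j + ((n : ℝ) - 1) * c ≤ ∑ k, G j k := by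
        intro j
        rw [← Finset.add_sum_erase _ _ (Finset.mem_univ j)]
        gcongr
        have hcard : (Finset.univ.erase j).card = n - 1 := by
          simp [Finset.card_erase_of_mem]
        calc ((n : ℝ) - 1) * c = ((n - 1 : ℕ) : ℝ) * c := by
              rw [Nat.cast_sub hn]; push_cast; ring
          _ ≤ ∑ k ∈ Finset.univ.erase j, G j k := by
              rw [← hcard]
              have := Finset.card_nsmul_le_sum (Finset.univ.erase j) (fun k => G j k) c
                (fun k hk => hc j k (Finset.ne_of_mem_erase hk).symm)
              simpa [nsmul_eq_mul] using this
      calc G.trace + (n : ℝ) * (((n : ℝ) - 1) * c)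
          = ∑ j, (G j j + ((n : ℝ) - 1) * c) := by
            rw [Finset.sum_add_distrib]
            simp [Matrix.trace, Matrix.diag, mul_comm]
        _ ≤ ∑ j, ∑ k, G j k := Finset.sum_le_sum fun j _ => this j
    -- upper bound via max eigenvalue
    have hup : ∑ j, μ j * r j ^ 2 ≤ μ i * (n : ℝ) := by
      calc ∑ j, μ j * r j ^ 2 ≤ ∑ j, μ i * r j ^ 2 :=
            Finset.sum_le_sum fun j _ => mul_le_mul_of_nonneg_right (hi j) (sq_nonneg _)
        _ = μ i * (n : ℝ) := by rw [← Finset.mul_sum, hsum2]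
    have hnpos : (0 : ℝ) < n := by exact_mod_cast hn
    have key : G.trace + (n : ℝ) * (((n : ℝ) - 1) * c) ≤ μ i * n := by
      calc G.trace + (n : ℝ) * (((n : ℝ) - 1) * c) ≤ ∑ j, ∑ k, G j k := hlow
        _ = ∑ j, μ j * r j ^ 2 := by rw [← hdot2, hdot]
        _ ≤ μ i * n := hup
    rw [div_add' _ _ _ hnpos.ne', div_le_iff₀ hnpos]
    nlinarith [key]
end
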